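/- Let A ∈ ℂ^{n×n}, and let (W, R, w', r) be an Arnoldi-like decomposition of order m for A, i.e. W ∈ ℂ^{n×m}, R ∈ ℂ^{m×m} is upper Hessenberg, w' ∈ ℂ^n, r ∈ ℂ, and A·W = W·R + r·w'·e_mᵀ. Then for every natural number k with k ≤ m − 1, A^k·(W·e_1) = W·(R^k·e_1), where e_1 is the first standard basis vector of ℂ^m. -/
import Mathlib

lemma hess_pow_zero {m : ℕ} (R : Matrix (Fin m) (Fin m) ℂ)
    (hR : ∀ i j : Fin m, (j : ℕ) + 1 < (i : ℕ) → R i j = 0)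
    (z : Fin m) (hz : (z : ℕ) = 0) :
    ∀ k : ℕ, ∀ i : Fin m, k < (i : ℕ) → (R ^ k) i z = 0 := by
  intro k
  induction k with
  | zero =>
    intro i hi
    simp [Matrix.one_apply, Fin.ext_iff, hz]
    omega
  | succ k ih =>
    intro i hi
    rw [pow_succ', Matrix.mul_apply]
    apply Finset.sum_eq_zero
    intro j _
    by_cases hj : k < (j : ℕ)
    · rw [ih j hj, mul_zero]
    · rw [hR i j (by omega), zero_mul]

/-- If `(W, R, w', r)` is an Arnoldi-like decomposition of order `m` for
`A ∈ ℂ^{n×n}`, i.e. `R` is upper Hessenberg and `A·W = W·R + r·w'·eₘᵀ`, then for every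
`k ≤ m - 1` one has `A^k·(W·e₁) = W·(R^k·e₁)`. -/
theorem arnoldi_like_power_identity {n m : ℕ} (hm : 1 ≤ m)
    (A : Matrix (Fin n) (Fin n) ℂ) (W : Matrix (Fin n) (Fin m) ℂ)
    (R : Matrix (Fin m) (Fin m) ℂ) (w' : Fin n → ℂ) (r : ℂ)
    (hR : ∀ i j : Fin m, (j : ℕ) + 1 < (i : ℕ) → R i j = 0)
    (hdec : A * W = W * R + r • Matrix.vecMulVec w' (Pi.single (⟨m - 1, by omega⟩ : Fin m) 1)) :
    ∀ k : ℕ, k ≤ m - 1 →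
      (A ^ k).mulVec (W.mulVec (Pi.single (⟨0, by omega⟩ : Fin m) 1)) =
        W.mulVec ((R ^ k).mulVec (Pi.single (⟨0, by omega⟩ : Fin m) 1)) := by
  intro k
  induction k with
  | zero => intro _; simp only [pow_zero, Matrix.one_mulVec]
  | succ k ih =>
    intro hk
    have hk' : k ≤ m - 1 := by omega
    have hkm : k < m - 1 := by omega
    rw [pow_succ', ← Matrix.mulVec_mulVec, ih hk', Matrix.mulVec_mulVec, hdec,
      Matrix.add_mulVec, Matrix.smul_mulVec, ← Matrix.mulVec_mulVec]
    have hzero : (Matrix.vecMulVec w' (Pi.single (⟨m - 1, by omega⟩ : Fin m) 1)).mulVec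
        ((R ^ k).mulVec (Pi.single (⟨0, by omega⟩ : Fin m) 1)) = 0 := by
      have h0 : (R ^ k) (⟨m - 1, by omega⟩ : Fin m) (⟨0, by omega⟩ : Fin m) = 0 :=
        hess_pow_zero R hR _ rfl k _ (by simpa using hkm)
      funext i
      simp [Matrix.mulVec, dotProduct, Matrix.vecMulVec_apply, Pi.single_apply,
        Finset.sum_ite_eq', h0]
    rw [hzero, smul_zero, add_zero]
    simp only [← Matrix.mulVec_mulVec, pow_succ']
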